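/- The terminal cost F(r,θ,V) = θ²(√2·√(V²+2a_m r) − V)/a_m + |θ|³/(3ω_m) + √2·(V²+2a_m r)^{3/2}(23V²+40a_m²+46a_m r)/(240 a_m³) − (V³/(3a_m) + V r²/a_m + 2V³ r/(3a_m²) + 2V⁵/(15a_m³)) satisfies F(0,0,0) = 0 and F(r,θ,V) ≥ 0 for all r ≥ 0, θ ∈ ℝ, V ≥ 0 with V² ≤ 2a_m r. -/

import Mathlib

/-!
Put s = √(V² + 2 a_m r) and w = √2 V; the constraint V² ≤ 2 a_m r says exactly that w ≤ s, so
√2 s - V ≥ 0 and the θ-terms are nonnegative. Clearing a_m³, eliminating r through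
2 a_m r = s² - V² and multiplying by √2, the remaining polynomial part becomes
40 a_m² (2 s³ - w³) + (46 s⁵ - 60 s⁴ w + 20 s² w³ - 3 w⁵), and both summands are nonnegative
for 0 ≤ w ≤ s: the quintic is 20 s² (s - w)² (2 s + w) + 3 (2 s⁵ - w⁵).
-/

/-- The NMPC terminal cost in terminal-set coordinates (r, θ, V). -/
noncomputable def terminalCost (a_m ω_m r θ V : ℝ) : ℝ :=
  θ ^ 2 * ((Real.sqrt 2 * Real.sqrt (V ^ 2 + 2 * a_m * r) - V) / a_m)
    + |θ| ^ 3 / (3 * ω_m)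
    + Real.sqrt 2 * (V ^ 2 + 2 * a_m * r) ^ ((3:ℝ)/2)
        * (23 * V ^ 2 + 40 * a_m ^ 2 + 46 * a_m * r) / (240 * a_m ^ 3)
    - (V ^ 3 / (3 * a_m) + V * r ^ 2 / a_m
        + 2 * V ^ 3 * r / (3 * a_m ^ 2)
        + 2 * V ^ 5 / (15 * a_m ^ 3))

section Inequalities

variable {a q r s V w : ℝ}

lemma two_mul_cube_sub_cube_nonneg (hw : 0 ≤ w) (hws : w ≤ s) : 0 ≤ 2 * s ^ 3 - w ^ 3 := by
  have hcube : w ^ 3 ≤ s ^ 3 := pow_le_pow_left₀ hw hws 3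
  nlinarith [pow_nonneg (hw.trans hws) 3]

lemma quintic_nonneg (hw : 0 ≤ w) (hws : w ≤ s) :
    0 ≤ 46 * s ^ 5 - 60 * s ^ 4 * w + 20 * s ^ 2 * w ^ 3 - 3 * w ^ 5 := by
  have hs : 0 ≤ s := hw.trans hws
  have hcubic : 0 ≤ s ^ 2 * ((s - w) ^ 2 * (2 * s + w)) := by positivity
  have hfifth : w ^ 5 ≤ s ^ 5 := pow_le_pow_left₀ hw hws 5
  nlinarith [pow_nonneg hs 5]

lemma terminal_polynomial_le_of_mul_le (hq : q ^ 2 = 2) (hq0 : 0 ≤ q) (hV : 0 ≤ V)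
    (hs : q * V ≤ s) :
    80 * a ^ 2 * V ^ 3 + 60 * V * (s ^ 2 - V ^ 2) ^ 2 + 80 * V ^ 3 * (s ^ 2 - V ^ 2)
      + 32 * V ^ 5 ≤ q * s ^ 3 * (23 * s ^ 2 + 40 * a ^ 2) := by
  have hw : 0 ≤ q * V := mul_nonneg hq0 hV
  have hq_pos : 0 < q := by nlinarith
  have hmul : q * (q * s ^ 3 * (23 * s ^ 2 + 40 * a ^ 2) - (80 * a ^ 2 * V ^ 3
      + 60 * V * (s ^ 2 - V ^ 2) ^ 2 + 80 * V ^ 3 * (s ^ 2 - V ^ 2) + 32 * V ^ 5))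
      = 40 * a ^ 2 * (2 * s ^ 3 - (q * V) ^ 3) + (46 * s ^ 5 - 60 * s ^ 4 * (q * V)
        + 20 * s ^ 2 * (q * V) ^ 3 - 3 * (q * V) ^ 5) := by
    linear_combination (23 * s ^ 5 + 40 * a ^ 2 * s ^ 3 + 40 * a ^ 2 * q * V ^ 3
      - 20 * q * s ^ 2 * V ^ 3 + 3 * q * V ^ 5 * (q ^ 2 + 2)) * hq
  rw [← sub_nonneg]
  refine nonneg_of_mul_nonneg_right ?_ hq_pos
  rw [hmul]
  exact add_nonneg (mul_nonneg (by positivity) (two_mul_cube_sub_cube_nonneg hw hs))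
    (quintic_nonneg hw hs)

lemma terminal_polynomial_le_of_sq_eq (hq : q ^ 2 = 2) (hq0 : 0 ≤ q) (hV : 0 ≤ V)
    (hs : q * V ≤ s) (hs_sq : s ^ 2 = V ^ 2 + 2 * a * r) :
    80 * a ^ 2 * V ^ 3 + 240 * a ^ 2 * V * r ^ 2 + 160 * a * V ^ 3 * r + 32 * V ^ 5
      ≤ q * s ^ 3 * (23 * V ^ 2 + 40 * a ^ 2 + 46 * a * r) := by
  have h2ar : 2 * a * r = s ^ 2 - V ^ 2 := by linarith
  calc 80 * a ^ 2 * V ^ 3 + 240 * a ^ 2 * V * r ^ 2 + 160 * a * V ^ 3 * r + 32 * V ^ 5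
      = 80 * a ^ 2 * V ^ 3 + 60 * V * (2 * a * r) ^ 2 + 80 * V ^ 3 * (2 * a * r)
          + 32 * V ^ 5 := by ring
    _ = 80 * a ^ 2 * V ^ 3 + 60 * V * (s ^ 2 - V ^ 2) ^ 2 + 80 * V ^ 3 * (s ^ 2 - V ^ 2)
          + 32 * V ^ 5 := by rw [h2ar]
    _ ≤ q * s ^ 3 * (23 * s ^ 2 + 40 * a ^ 2) := terminal_polynomial_le_of_mul_le hq hq0 hV hs
    _ = q * s ^ 3 * (23 * V ^ 2 + 40 * a ^ 2 + 46 * a * r) := by rw [hs_sq]; ring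

lemma terminal_polynomial_div_eq (ha : a ≠ 0) :
    V ^ 3 / (3 * a) + V * r ^ 2 / a + 2 * V ^ 3 * r / (3 * a ^ 2) + 2 * V ^ 5 / (15 * a ^ 3)
      = (80 * a ^ 2 * V ^ 3 + 240 * a ^ 2 * V * r ^ 2 + 160 * a * V ^ 3 * r + 32 * V ^ 5)
          / (240 * a ^ 3) := by
  field_simp
  ring

lemma sqrt_two_mul_le_sqrt {x : ℝ} (hV : 0 ≤ V) (h : 2 * V ^ 2 ≤ x) : √2 * V ≤ √x := by
  rw [← Real.sqrt_sq hV, ← Real.sqrt_mul zero_le_two]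
  exact Real.sqrt_le_sqrt h

end Inequalities

/-- The terminal cost vanishes at the origin and is nonnegative on the
    terminal set. -/
theorem terminal_cost_nonneg
    (a_m ω_m : ℝ) (ha : a_m > 0) (hω : ω_m > 0) :
    terminalCost a_m ω_m 0 0 0 = 0 ∧
    ∀ r θ V : ℝ, r ≥ 0 → V ≥ 0 → V ^ 2 ≤ 2 * a_m * r →
      0 ≤ terminalCost a_m ω_m r θ V := by
  refine ⟨by simp [terminalCost, Real.zero_rpow (by norm_num : (3 : ℝ) / 2 ≠ 0)], ?_⟩
  intro r θ V hr hV hle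
  set x := V ^ 2 + 2 * a_m * r
  have hx : 0 ≤ x := by positivity
  have hsV : √2 * V ≤ √x := sqrt_two_mul_le_sqrt hV (by linarith)
  have hV_le : V ≤ √2 * √x :=
    calc V ≤ √2 * V := le_mul_of_one_le_left hV Real.one_lt_sqrt_two.le
      _ ≤ √x := hsV
      _ ≤ √2 * √x := le_mul_of_one_le_left (Real.sqrt_nonneg x) Real.one_lt_sqrt_two.le
  have hpoly := terminal_polynomial_le_of_sq_eq (Real.sq_sqrt zero_le_two) (Real.sqrt_nonneg 2)
    hV hsV (Real.sq_sqrt hx)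
  rw [terminalCost, Real.rpow_div_two_eq_sqrt 3 hx, Real.rpow_ofNat,
    terminal_polynomial_div_eq ha.ne']
  have hθ : 0 ≤ θ ^ 2 * ((√2 * √x - V) / a_m) :=
    mul_nonneg (sq_nonneg θ) (div_nonneg (sub_nonneg.2 hV_le) ha.le)
  have hθ_cube : 0 ≤ |θ| ^ 3 / (3 * ω_m) := by positivity
  have htail := div_le_div_of_nonneg_right hpoly (by positivity : (0 : ℝ) ≤ 240 * a_m ^ 3)
  linarith
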